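/- arXiv:1303.7422 — 5 statements merged into one kernel-verified Lean document; each statement's English description precedes it below -/
import Mathlib

section
/- Let α : ℝ → E³ be a unit-speed curve with Bishop frame {T, M₁, M₂} and Bishop curvatures k₁, k₂. If D(s) = T(s) + H₁(s)M₁(s) + H₂(s)M₂(s) is a constant vector field (where H₁, H₂ are differentiable real functions), then H₁² + H₂² is constant and ⟨T(s), D⟩ = 1 for all s. -/
open RealInnerProductSpace

/-- If D = T + H₁M₁ + H₂M₂ is a constant vector field along a unit-speed
curve with Bishop frame {T, M₁, M₂}, then H₁² + H₂² is constant and ⟨T(s), D⟩ = 1. -/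
theorem stmt3
    (α T M₁ M₂ : ℝ → EuclideanSpace ℝ (Fin 3)) (k₁ k₂ : ℝ → ℝ)
    (hα : Differentiable ℝ α) (hT : ∀ s, deriv α s = T s)
    (hTd : Differentiable ℝ T) (hM₁d : Differentiable ℝ M₁) (hM₂d : Differentiable ℝ M₂)
    (hTT : ∀ s, ⟪T s, T s⟫ = 1) (hM₁M₁ : ∀ s, ⟪M₁ s, M₁ s⟫ = 1)
    (hM₂M₂ : ∀ s, ⟪M₂ s, M₂ s⟫ = 1)
    (hTM₁ : ∀ s, ⟪T s, M₁ s⟫ = 0) (hTM₂ : ∀ s, ⟪T s, M₂ s⟫ = 0)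
    (hM₁M₂ : ∀ s, ⟪M₁ s, M₂ s⟫ = 0)
    (hT' : ∀ s, deriv T s = k₁ s • M₁ s + k₂ s • M₂ s)
    (hM₁' : ∀ s, deriv M₁ s = -(k₁ s) • T s)
    (hM₂' : ∀ s, deriv M₂ s = -(k₂ s) • T s)
    (H₁ H₂ : ℝ → ℝ) (hH₁d : Differentiable ℝ H₁) (hH₂d : Differentiable ℝ H₂)
    (D : EuclideanSpace ℝ (Fin 3))
    (hD : ∀ s, T s + H₁ s • M₁ s + H₂ s • M₂ s = D) :
    (∃ c : ℝ, ∀ s, H₁ s ^ 2 + H₂ s ^ 2 = c) ∧ (∀ s, ⟪T s, D⟫ = 1) := by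
  constructor
  · refine ⟨⟪D, D⟫ - 1, fun s => ?_⟩
    have h := hD s
    have : ⟪D, D⟫ = 1 + (H₁ s ^ 2 + H₂ s ^ 2) := by
      rw [← h]
      simp only [inner_add_left, inner_add_right, real_inner_smul_left, real_inner_smul_right,
        hTT, hM₁M₁, hM₂M₂, hTM₁, hTM₂, hM₁M₂]
      have e1 : ⟪M₁ s, T s⟫ = 0 := by rw [real_inner_comm]; exact hTM₁ s
      have e2 : ⟪M₂ s, T s⟫ = 0 := by rw [real_inner_comm]; exact hTM₂ s
      have e3 : ⟪M₂ s, M₁ s⟫ = 0 := by rw [real_inner_comm]; exact hM₁M₂ s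
      rw [e1, e2, e3]
      ring
    rw [this]; ring
  · intro s
    rw [← hD s]
    simp only [inner_add_right, real_inner_smul_right, hTT, hTM₁, hTM₂]
    ring
end

section
/- Let α : ℝ → E³ be a unit-speed curve with Bishop frame {T, M₁, M₂} and Bishop curvatures k₁, k₂. If α is a generalized helix with fixed unit axis X making constant angle θ ≠ π/2 with T (i.e., ⟨T(s), X⟩ = cos θ ≠ 0 for all s), then setting H₁(s) = ⟨M₁(s),X⟩/cos θ and H₂(s) = ⟨M₂(s),X⟩/cos θ, one has H₁′ = −k₁, H₂′ = −k₂, and consequently k₁(s)∫₀ˢk₁ + k₂(s)∫₀ˢk₂ = k₁(s)(H₁(0) − H₁(s)) + k₂(s)(H₂(0) − H₂(s)), and in particular k₁H₁ + k₂H₂ = 0 for all s. -/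
open RealInnerProductSpace

section

variable {E : Type*} [NormedAddCommGroup E] [InnerProductSpace ℝ E]

theorem hasDerivAt_inner_div_of_deriv_eq_neg_smul {M T : ℝ → E} {X : E} {k c s : ℝ}
    (hc : c ≠ 0) (hM : DifferentiableAt ℝ M s) (hM' : deriv M s = -k • T s)
    (hTX : ⟪T s, X⟫ = c) :
    HasDerivAt (fun t => ⟪M t, X⟫ / c) (-k) s := by
  have h := (hM.hasDerivAt.inner ℝ (hasDerivAt_const s X)).div_const c
  rwa [hM', inner_zero_right, zero_add, inner_smul_left, hTX, RCLike.conj_to_real,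
    mul_div_assoc, div_self hc, mul_one] at h

theorem inner_deriv_eq_zero_of_inner_eq_const {T : ℝ → E} {X : E} {c s : ℝ}
    (hT : DifferentiableAt ℝ T s) (hTX : ∀ t, ⟪T t, X⟫ = c) :
    ⟪deriv T s, X⟫ = 0 := by
  have h := hT.hasDerivAt.inner ℝ (hasDerivAt_const s X)
  rw [inner_zero_right, zero_add, show (fun t => ⟪T t, X⟫) = fun _ => c from funext hTX] at h
  exact h.unique (hasDerivAt_const s c)

end

theorem intervalIntegral.integral_eq_sub_of_hasDerivAt_neg {H k : ℝ → ℝ}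
    (hH : ∀ t, HasDerivAt H (-k t) t) (hk : Continuous k) (a b : ℝ) :
    ∫ t in a..b, k t = H a - H b := by
  have h := integral_eq_sub_of_hasDerivAt (fun t _ => hH t) (hk.neg.intervalIntegrable a b)
  rw [intervalIntegral.integral_neg] at h
  linarith

theorem stmt5_general
    (T M₁ M₂ : ℝ → EuclideanSpace ℝ (Fin 3)) (k₁ k₂ : ℝ → ℝ)
    (hk₁ : Continuous k₁) (hk₂ : Continuous k₂)
    (hTd : Differentiable ℝ T) (hM₁d : Differentiable ℝ M₁) (hM₂d : Differentiable ℝ M₂)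
    (hT' : ∀ s, deriv T s = k₁ s • M₁ s + k₂ s • M₂ s)
    (hM₁' : ∀ s, deriv M₁ s = -(k₁ s) • T s)
    (hM₂' : ∀ s, deriv M₂ s = -(k₂ s) • T s)
    (X : EuclideanSpace ℝ (Fin 3)) (θ : ℝ)
    (hθ : Real.cos θ ≠ 0) (hconst : ∀ s, ⟪T s, X⟫ = Real.cos θ)
    (H₁ H₂ : ℝ → ℝ)
    (hH₁def : ∀ s, H₁ s = ⟪M₁ s, X⟫ / Real.cos θ)
    (hH₂def : ∀ s, H₂ s = ⟪M₂ s, X⟫ / Real.cos θ) :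
    (∀ s, deriv H₁ s = -(k₁ s)) ∧ (∀ s, deriv H₂ s = -(k₂ s)) ∧
    (∀ s, k₁ s * (∫ t in (0:ℝ)..s, k₁ t) + k₂ s * (∫ t in (0:ℝ)..s, k₂ t)
        = k₁ s * (H₁ 0 - H₁ s) + k₂ s * (H₂ 0 - H₂ s)) ∧
    (∀ s, k₁ s * H₁ s + k₂ s * H₂ s = 0) := by
  have hH₁ : ∀ s, HasDerivAt H₁ (-k₁ s) s := fun s => funext hH₁def ▸
    hasDerivAt_inner_div_of_deriv_eq_neg_smul hθ (hM₁d s) (hM₁' s) (hconst s)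
  have hH₂ : ∀ s, HasDerivAt H₂ (-k₂ s) s := fun s => funext hH₂def ▸
    hasDerivAt_inner_div_of_deriv_eq_neg_smul hθ (hM₂d s) (hM₂' s) (hconst s)
  refine ⟨fun s => (hH₁ s).deriv, fun s => (hH₂ s).deriv, fun s => ?_, fun s => ?_⟩
  · rw [intervalIntegral.integral_eq_sub_of_hasDerivAt_neg hH₁ hk₁,
      intervalIntegral.integral_eq_sub_of_hasDerivAt_neg hH₂ hk₂]
  · have h := inner_deriv_eq_zero_of_inner_eq_const (hTd s) hconst
    rw [hT' s, inner_add_left, real_inner_smul_left, real_inner_smul_left] at h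
    rw [hH₁def, hH₂def, mul_div_assoc', mul_div_assoc', ← add_div, h, zero_div]

/-- If α is a generalized helix with unit axis X, ⟨T(s),X⟩ = cos θ ≠ 0, then
H₁ = ⟨M₁,X⟩/cos θ and H₂ = ⟨M₂,X⟩/cos θ satisfy H₁′ = −k₁, H₂′ = −k₂, the integral
identity k₁∫₀ˢk₁ + k₂∫₀ˢk₂ = k₁(H₁(0) − H₁(s)) + k₂(H₂(0) − H₂(s)), and
k₁H₁ + k₂H₂ = 0. -/
theorem stmt5
    (α T M₁ M₂ : ℝ → EuclideanSpace ℝ (Fin 3)) (k₁ k₂ : ℝ → ℝ)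
    (hk₁ : Continuous k₁) (hk₂ : Continuous k₂)
    (hα : Differentiable ℝ α) (hT : ∀ s, deriv α s = T s)
    (hTd : Differentiable ℝ T) (hM₁d : Differentiable ℝ M₁) (hM₂d : Differentiable ℝ M₂)
    (hTT : ∀ s, ⟪T s, T s⟫ = 1) (hM₁M₁ : ∀ s, ⟪M₁ s, M₁ s⟫ = 1)
    (hM₂M₂ : ∀ s, ⟪M₂ s, M₂ s⟫ = 1)
    (hTM₁ : ∀ s, ⟪T s, M₁ s⟫ = 0) (hTM₂ : ∀ s, ⟪T s, M₂ s⟫ = 0)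
    (hM₁M₂ : ∀ s, ⟪M₁ s, M₂ s⟫ = 0)
    (hT' : ∀ s, deriv T s = k₁ s • M₁ s + k₂ s • M₂ s)
    (hM₁' : ∀ s, deriv M₁ s = -(k₁ s) • T s)
    (hM₂' : ∀ s, deriv M₂ s = -(k₂ s) • T s)
    (X : EuclideanSpace ℝ (Fin 3)) (hXunit : ‖X‖ = 1) (θ : ℝ)
    (hθ : Real.cos θ ≠ 0) (hconst : ∀ s, ⟪T s, X⟫ = Real.cos θ)
    (H₁ H₂ : ℝ → ℝ)
    (hH₁def : ∀ s, H₁ s = ⟪M₁ s, X⟫ / Real.cos θ)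
    (hH₂def : ∀ s, H₂ s = ⟪M₂ s, X⟫ / Real.cos θ) :
    (∀ s, deriv H₁ s = -(k₁ s)) ∧ (∀ s, deriv H₂ s = -(k₂ s)) ∧
    (∀ s, k₁ s * (∫ t in (0:ℝ)..s, k₁ t) + k₂ s * (∫ t in (0:ℝ)..s, k₂ t)
        = k₁ s * (H₁ 0 - H₁ s) + k₂ s * (H₂ 0 - H₂ s)) ∧
    (∀ s, k₁ s * H₁ s + k₂ s * H₂ s = 0) :=
  stmt5_general T M₁ M₂ k₁ k₂ hk₁ hk₂ hTd hM₁d hM₂d hT' hM₁' hM₂' X θ hθ hconst H₁ H₂ hH₁def hH₂def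
end

section
/- Let α : ℝ → E⁴ be a unit-speed curve with parallel transport frame {T, M₁, M₂, M₃} and curvatures k₁, k₂, k₃, and let X be a fixed unit vector with ⟨T(s), X⟩ = cos φ a nonzero constant. Then for i = 1, 2, 3 the function s ↦ ⟨Mᵢ(s), X⟩ is differentiable with derivative −kᵢ(s) cos φ, and k₁⟨M₁,X⟩ + k₂⟨M₂,X⟩ + k₃⟨M₃,X⟩ = 0 at every s. -/
open RealInnerProductSpace

lemma aux_deriv_inner {f : ℝ → EuclideanSpace ℝ (Fin 4)} (hf : Differentiable ℝ f)
    (X : EuclideanSpace ℝ (Fin 4)) (s : ℝ) :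
    deriv (fun t => ⟪f t, X⟫) s = ⟪deriv f s, X⟫ := by
  have h := ((hf s).hasDerivAt.inner ℝ (hasDerivAt_const s X))
  simpa using h.deriv

/-- For a unit-speed curve in E⁴ with parallel transport frame and fixed
unit vector X with ⟨T, X⟩ = cos φ ≠ 0 constant, each ⟨Mᵢ, X⟩ has derivative −kᵢ cos φ and
k₁⟨M₁,X⟩ + k₂⟨M₂,X⟩ + k₃⟨M₃,X⟩ = 0. -/
theorem stmt8
    (α T M₁ M₂ M₃ : ℝ → EuclideanSpace ℝ (Fin 4)) (k₁ k₂ k₃ : ℝ → ℝ)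
    (hα : Differentiable ℝ α) (hT : ∀ s, deriv α s = T s)
    (hTd : Differentiable ℝ T) (hM₁d : Differentiable ℝ M₁)
    (hM₂d : Differentiable ℝ M₂) (hM₃d : Differentiable ℝ M₃)
    (hTT : ∀ s, ⟪T s, T s⟫ = 1) (hM₁M₁ : ∀ s, ⟪M₁ s, M₁ s⟫ = 1)
    (hM₂M₂ : ∀ s, ⟪M₂ s, M₂ s⟫ = 1) (hM₃M₃ : ∀ s, ⟪M₃ s, M₃ s⟫ = 1)
    (hTM₁ : ∀ s, ⟪T s, M₁ s⟫ = 0) (hTM₂ : ∀ s, ⟪T s, M₂ s⟫ = 0)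
    (hTM₃ : ∀ s, ⟪T s, M₃ s⟫ = 0) (hM₁M₂ : ∀ s, ⟪M₁ s, M₂ s⟫ = 0)
    (hM₁M₃ : ∀ s, ⟪M₁ s, M₃ s⟫ = 0) (hM₂M₃ : ∀ s, ⟪M₂ s, M₃ s⟫ = 0)
    (hT' : ∀ s, deriv T s = k₁ s • M₁ s + k₂ s • M₂ s + k₃ s • M₃ s)
    (hM₁' : ∀ s, deriv M₁ s = -(k₁ s) • T s)
    (hM₂' : ∀ s, deriv M₂ s = -(k₂ s) • T s)
    (hM₃' : ∀ s, deriv M₃ s = -(k₃ s) • T s)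
    (X : EuclideanSpace ℝ (Fin 4)) (hXunit : ‖X‖ = 1) (φ : ℝ)
    (hφ : Real.cos φ ≠ 0) (hconst : ∀ s, ⟪T s, X⟫ = Real.cos φ) :
    (∀ s, deriv (fun t => ⟪M₁ t, X⟫) s = -(k₁ s) * Real.cos φ) ∧
    (∀ s, deriv (fun t => ⟪M₂ t, X⟫) s = -(k₂ s) * Real.cos φ) ∧
    (∀ s, deriv (fun t => ⟪M₃ t, X⟫) s = -(k₃ s) * Real.cos φ) ∧
    (∀ s, k₁ s * ⟪M₁ s, X⟫ + k₂ s * ⟪M₂ s, X⟫ + k₃ s * ⟪M₃ s, X⟫ = 0) := by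
  refine ⟨fun s => ?_, fun s => ?_, fun s => ?_, fun s => ?_⟩
  · rw [aux_deriv_inner hM₁d X s, hM₁' s, inner_smul_left, hconst s]
    simp
  · rw [aux_deriv_inner hM₂d X s, hM₂' s, inner_smul_left, hconst s]
    simp
  · rw [aux_deriv_inner hM₃d X s, hM₃' s, inner_smul_left, hconst s]
    simp
  · have h0 : deriv (fun t => ⟪T t, X⟫) s = 0 := by
      have : (fun t => ⟪T t, X⟫) = fun _ => Real.cos φ := funext hconst
      rw [this]; simp
    rw [aux_deriv_inner hTd X s, hT' s] at h0
    simpa [inner_add_left, inner_smul_left] using h0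
end

section
/- Let α : ℝ → E⁴ be a unit-speed inclined curve with parallel transport frame {T, M₁, M₂, M₃}, curvatures k₁, k₂, k₃, and fixed unit axis X with ⟨T(s), X⟩ = cos φ ≠ 0. Then k₁(s)∫₀ˢk₁ dt + k₂(s)∫₀ˢk₂ dt + k₃(s)∫₀ˢk₃ dt = k₁(s)c₁ + k₂(s)c₂ + k₃(s)c₃ for the constants cᵢ = ⟨Mᵢ(0), X⟩/cos φ, and if additionally ⟨Mᵢ(0), X⟩ = 0 for i = 1, 2, 3, then k₁∫₀ˢk₁ + k₂∫₀ˢk₂ + k₃∫₀ˢk₃ = 0 identically. -/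
open RealInnerProductSpace intervalIntegral

private lemma aux_inner (M Tt : ℝ → EuclideanSpace ℝ (Fin 4)) (k : ℝ → ℝ) (c : ℝ)
    (X : EuclideanSpace ℝ (Fin 4))
    (hMd : Differentiable ℝ M) (hM' : ∀ s, deriv M s = -(k s) • Tt s)
    (hk : Continuous k) (hconst : ∀ s, ⟪Tt s, X⟫ = c) :
    ∀ s, ⟪M s, X⟫ = ⟪M 0, X⟫ - c * ∫ t in (0:ℝ)..s, k t := by
  intro s
  have hD : ∀ t, HasDerivAt (fun u => ⟪M u, X⟫) (-(k t) * c) t := by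
    intro t
    have h := HasDerivAt.inner ℝ (hMd t).hasDerivAt (hasDerivAt_const t X)
    simpa [hM', inner_smul_left, hconst, inner_zero_right] using h
  have hint : ∫ t in (0:ℝ)..s, (-(k t) * c) = ⟪M s, X⟫ - ⟪M 0, X⟫ :=
    integral_eq_sub_of_hasDerivAt (fun t _ => hD t)
      ((hk.neg.mul continuous_const).intervalIntegrable 0 s)
  have : ∫ t in (0:ℝ)..s, (-(k t) * c) = -(c * ∫ t in (0:ℝ)..s, k t) := by
    rw [intervalIntegral.integral_mul_const, intervalIntegral.integral_neg]
    ring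
  linarith [hint, this]

/-- For a unit-speed inclined curve in E⁴ with unit axis X,
⟨T,X⟩ = cos φ ≠ 0, the quantity k₁∫₀ˢk₁ + k₂∫₀ˢk₂ + k₃∫₀ˢk₃ equals k₁c₁ + k₂c₂ + k₃c₃
with cᵢ = ⟨Mᵢ(0),X⟩/cos φ; if moreover ⟨Mᵢ(0),X⟩ = 0 for all i, it vanishes identically. -/
theorem stmt12
    (α T M₁ M₂ M₃ : ℝ → EuclideanSpace ℝ (Fin 4)) (k₁ k₂ k₃ : ℝ → ℝ)
    (hα : Differentiable ℝ α) (hT : ∀ s, deriv α s = T s)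
    (hTd : Differentiable ℝ T) (hM₁d : Differentiable ℝ M₁)
    (hM₂d : Differentiable ℝ M₂) (hM₃d : Differentiable ℝ M₃)
    (hTT : ∀ s, ⟪T s, T s⟫ = 1) (hM₁M₁ : ∀ s, ⟪M₁ s, M₁ s⟫ = 1)
    (hM₂M₂ : ∀ s, ⟪M₂ s, M₂ s⟫ = 1) (hM₃M₃ : ∀ s, ⟪M₃ s, M₃ s⟫ = 1)
    (hTM₁ : ∀ s, ⟪T s, M₁ s⟫ = 0) (hTM₂ : ∀ s, ⟪T s, M₂ s⟫ = 0)
    (hTM₃ : ∀ s, ⟪T s, M₃ s⟫ = 0) (hM₁M₂ : ∀ s, ⟪M₁ s, M₂ s⟫ = 0)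
    (hM₁M₃ : ∀ s, ⟪M₁ s, M₃ s⟫ = 0) (hM₂M₃ : ∀ s, ⟪M₂ s, M₃ s⟫ = 0)
    (hT' : ∀ s, deriv T s = k₁ s • M₁ s + k₂ s • M₂ s + k₃ s • M₃ s)
    (hM₁' : ∀ s, deriv M₁ s = -(k₁ s) • T s)
    (hM₂' : ∀ s, deriv M₂ s = -(k₂ s) • T s)
    (hM₃' : ∀ s, deriv M₃ s = -(k₃ s) • T s)
    (hk₁ : Continuous k₁) (hk₂ : Continuous k₂) (hk₃ : Continuous k₃)
    (X : EuclideanSpace ℝ (Fin 4)) (hXunit : ‖X‖ = 1) (φ : ℝ)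
    (hφ : Real.cos φ ≠ 0) (hconst : ∀ s, ⟪T s, X⟫ = Real.cos φ) :
    (∀ s, k₁ s * (∫ t in (0:ℝ)..s, k₁ t) + k₂ s * (∫ t in (0:ℝ)..s, k₂ t)
        + k₃ s * (∫ t in (0:ℝ)..s, k₃ t)
      = k₁ s * (⟪M₁ 0, X⟫ / Real.cos φ) + k₂ s * (⟪M₂ 0, X⟫ / Real.cos φ)
        + k₃ s * (⟪M₃ 0, X⟫ / Real.cos φ)) ∧
    ((⟪M₁ 0, X⟫ = 0 ∧ ⟪M₂ 0, X⟫ = 0 ∧ ⟪M₃ 0, X⟫ = 0) →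
      ∀ s, k₁ s * (∫ t in (0:ℝ)..s, k₁ t) + k₂ s * (∫ t in (0:ℝ)..s, k₂ t)
        + k₃ s * (∫ t in (0:ℝ)..s, k₃ t) = 0) := by
  have h1 := aux_inner M₁ T k₁ (Real.cos φ) X hM₁d hM₁' hk₁ hconst
  have h2 := aux_inner M₂ T k₂ (Real.cos φ) X hM₂d hM₂' hk₂ hconst
  have h3 := aux_inner M₃ T k₃ (Real.cos φ) X hM₃d hM₃' hk₃ hconst
  have hzero : ∀ s, k₁ s * ⟪M₁ s, X⟫ + k₂ s * ⟪M₂ s, X⟫ + k₃ s * ⟪M₃ s, X⟫ = 0 := by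
    intro s
    have h := HasDerivAt.inner ℝ (hTd s).hasDerivAt (hasDerivAt_const s X)
    have hc : HasDerivAt (fun u => ⟪T u, X⟫) 0 s := by
      have : (fun u => ⟪T u, X⟫) = fun _ => Real.cos φ := funext hconst
      rw [this]; exact hasDerivAt_const _ _
    have := h.unique hc
    rw [hT' s] at this
    simp only [inner_add_left, real_inner_smul_left, inner_zero_right, zero_add] at this
    linarith
  have main : ∀ s, k₁ s * (∫ t in (0:ℝ)..s, k₁ t) + k₂ s * (∫ t in (0:ℝ)..s, k₂ t)
      + k₃ s * (∫ t in (0:ℝ)..s, k₃ t)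
      = k₁ s * (⟪M₁ 0, X⟫ / Real.cos φ) + k₂ s * (⟪M₂ 0, X⟫ / Real.cos φ)
        + k₃ s * (⟪M₃ 0, X⟫ / Real.cos φ) := by
    intro s
    have hz := hzero s
    rw [h1 s, h2 s, h3 s] at hz
    have key : k₁ s * ⟪M₁ 0, X⟫ + k₂ s * ⟪M₂ 0, X⟫ + k₃ s * ⟪M₃ 0, X⟫
        = Real.cos φ * (k₁ s * (∫ t in (0:ℝ)..s, k₁ t) + k₂ s * (∫ t in (0:ℝ)..s, k₂ t)
          + k₃ s * (∫ t in (0:ℝ)..s, k₃ t)) := by ring_nf at hz ⊢; linarith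
    have expand : k₁ s * (⟪M₁ 0, X⟫ / Real.cos φ) + k₂ s * (⟪M₂ 0, X⟫ / Real.cos φ)
        + k₃ s * (⟪M₃ 0, X⟫ / Real.cos φ)
        = (k₁ s * ⟪M₁ 0, X⟫ + k₂ s * ⟪M₂ 0, X⟫ + k₃ s * ⟪M₃ 0, X⟫) / Real.cos φ := by ring
    rw [expand, key]
    field_simp
  exact ⟨main, fun ⟨e1, e2, e3⟩ s => by rw [main s, e1, e2, e3]; ring⟩
end

section
/- Let α : ℝ → E⁴ be a unit-speed curve with parallel transport frame {T, M₁, M₂, M₃} and curvatures k₁, k₂, k₃, with k₁ nowhere zero. Suppose the spherical image α_{M₁} is the reparametrization of M₁ by its own arclength s_{M₁}, where ds_{M₁}/ds = ‖M₁′(s)‖ = |k₁(s)|. Then the unit tangent of α_{M₁} at the parameter corresponding to s equals −sgn(k₁(s))·T(s); in particular if k₁ > 0 everywhere and α is an inclined curve with axis X (⟨T, X⟩ constant), then α_{M₁} is also an inclined curve with the same axis X. -/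
open RealInnerProductSpace

/-- Let σ(s) = ∫₀ˢ |k₁| be the arclength of the spherical image of M₁
(so ds_{M₁}/ds = ‖M₁′‖ = |k₁|) and let β be the reparametrization of M₁ by σ
(β(σ(s)) = M₁(s)). Then the unit tangent of the spherical image satisfies
β′(σ(s)) = −sgn(k₁(s))·T(s); in particular, if k₁ > 0 everywhere and the tangent T has
constant inner product with a fixed nonzero axis X, then so does the tangent of the
spherical image — it is an inclined curve with the same axis. -/
theorem stmt18
    (α T M₁ M₂ M₃ : ℝ → EuclideanSpace ℝ (Fin 4)) (k₁ k₂ k₃ : ℝ → ℝ)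
    (hα : Differentiable ℝ α) (hT : ∀ s, deriv α s = T s)
    (hTd : Differentiable ℝ T) (hM₁d : Differentiable ℝ M₁)
    (hM₂d : Differentiable ℝ M₂) (hM₃d : Differentiable ℝ M₃)
    (hTT : ∀ s, ⟪T s, T s⟫ = 1) (hM₁M₁ : ∀ s, ⟪M₁ s, M₁ s⟫ = 1)
    (hM₂M₂ : ∀ s, ⟪M₂ s, M₂ s⟫ = 1) (hM₃M₃ : ∀ s, ⟪M₃ s, M₃ s⟫ = 1)
    (hTM₁ : ∀ s, ⟪T s, M₁ s⟫ = 0) (hTM₂ : ∀ s, ⟪T s, M₂ s⟫ = 0)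
    (hTM₃ : ∀ s, ⟪T s, M₃ s⟫ = 0) (hM₁M₂ : ∀ s, ⟪M₁ s, M₂ s⟫ = 0)
    (hM₁M₃ : ∀ s, ⟪M₁ s, M₃ s⟫ = 0) (hM₂M₃ : ∀ s, ⟪M₂ s, M₃ s⟫ = 0)
    (hT' : ∀ s, deriv T s = k₁ s • M₁ s + k₂ s • M₂ s + k₃ s • M₃ s)
    (hM₁' : ∀ s, deriv M₁ s = -(k₁ s) • T s)
    (hM₂' : ∀ s, deriv M₂ s = -(k₂ s) • T s)
    (hM₃' : ∀ s, deriv M₃ s = -(k₃ s) • T s)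
    (hk₁ : Continuous k₁) (hk₁ne : ∀ s, k₁ s ≠ 0)
    (σ : ℝ → ℝ) (hσ : ∀ s, σ s = ∫ t in (0:ℝ)..s, |k₁ t|)
    (β : ℝ → EuclideanSpace ℝ (Fin 4)) (hβd : Differentiable ℝ β)
    (hβ : ∀ s, β (σ s) = M₁ s) :
    (∀ s, deriv β (σ s) = -(Real.sign (k₁ s)) • T s) ∧
    ((∀ s, 0 < k₁ s) →
      ∀ X : EuclideanSpace ℝ (Fin 4), X ≠ 0 → (∀ s t, ⟪T s, X⟫ = ⟪T t, X⟫) →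
        ∀ s t, ⟪deriv β (σ s), X⟫ = ⟪deriv β (σ t), X⟫) := by
  have habs : Continuous fun t => |k₁ t| := hk₁.abs
  have main : ∀ s, deriv β (σ s) = -(Real.sign (k₁ s)) • T s := by
    intro s
    have hσd : HasDerivAt σ (|k₁ s|) s := by
      have : HasDerivAt (fun u => ∫ t in (0:ℝ)..u, |k₁ t|) (|k₁ s|) s :=
        intervalIntegral.integral_hasDerivAt_right
          (habs.intervalIntegrable _ _)
          (habs.stronglyMeasurableAtFilter _ _)
          habs.continuousAt
      have hfe : σ = fun u => ∫ t in (0:ℝ)..u, |k₁ t| := funext hσ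
      rw [hfe]; exact this
    have hβσ : HasDerivAt β (deriv β (σ s)) (σ s) := (hβd (σ s)).hasDerivAt
    have hcomp : HasDerivAt (fun u => β (σ u)) (|k₁ s| • deriv β (σ s)) s :=
      hβσ.scomp s hσd
    have hM : HasDerivAt M₁ (|k₁ s| • deriv β (σ s)) s :=
      hcomp.congr_of_eventuallyEq (Filter.Eventually.of_forall fun u => (hβ u).symm)
    have heq : |k₁ s| • deriv β (σ s) = -(k₁ s) • T s := by
      rw [← hM.deriv]; exact hM₁' s
    have hne : |k₁ s| ≠ 0 := abs_ne_zero.mpr (hk₁ne s)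
    have := congrArg (fun v => (|k₁ s|)⁻¹ • v) heq
    simp only [smul_smul, inv_mul_cancel₀ hne, one_smul] at this
    rw [this]
    congr 1
    rcases lt_or_gt_of_ne (hk₁ne s) with h | h
    · rw [abs_of_neg h, Real.sign_of_neg h]; field_simp; exact div_self (hk₁ne s)
    · rw [abs_of_pos h, Real.sign_of_pos h]; field_simp
  refine ⟨main, fun hpos X _ hconst s t => ?_⟩
  rw [main s, main t, Real.sign_of_pos (hpos s), Real.sign_of_pos (hpos t)]
  simp only [inner_smul_left]
  rw [hconst s t]
end
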